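/- arXiv:1101.3849 — 2 statements merged into one kernel-verified Lean document; each statement's English description precedes it below -/
import Mathlib

section
/- Let k ∈ {2, ..., r-1}. If i < k-1 then l(\check{w}_k · t_{i,k}) ≥ l(\check{w}_k) + 2 in S_r. For i = k-1 one has \check{w}_k · t_{k-1,k} = \check{w}_{k-1} and l(\check{w}_k · t_{k-1,k}) = l(\check{w}_k) + 1. -/
/-- The simple transposition `s_i = (i, i+1)`, viewed in `Equiv.Perm ℕ`. -/
def sT (i : ℕ) : Equiv.Perm ℕ := Equiv.swap i (i + 1)

/-- The transposition `t_{i,j}` exchanging `i` and `j`. -/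
def tT (i j : ℕ) : Equiv.Perm ℕ := Equiv.swap i j

/-- The length (number of inversions) of a permutation of `{1, …, r}`. -/
def len (r : ℕ) (w : Equiv.Perm ℕ) : ℕ :=
  (((Finset.Icc 1 r) ×ˢ (Finset.Icc 1 r)).filter
    (fun p => p.1 < p.2 ∧ w p.2 < w p.1)).card

/-- `wcheck r k = s_{r-1} s_{r-2} ⋯ s_k` for `k ≤ r - 1`, and the identity for `k = r`. -/
def wcheck (r k : ℕ) : Equiv.Perm ℕ :=
  ((List.range (r - k)).map (fun m => sT (r - 1 - m))).prod

lemma wcheck_succ (r k : ℕ) (h : k < r) : wcheck r k = wcheck r (k+1) * sT k := by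
  unfold wcheck
  have h1 : r - k = (r - (k+1)) + 1 := by omega
  have h2 : r - 1 - (r - (k+1)) = k := by omega
  rw [h1, List.range_succ, List.map_append, List.prod_append]
  simp only [List.map_cons, List.map_nil, List.prod_cons, List.prod_nil, mul_one]
  rw [h2]

lemma wcheck_apply' (r : ℕ) : ∀ n k, k ≤ r → r - k = n → ∀ x,
    wcheck r k x = if x = k then r else if k < x ∧ x ≤ r then x - 1 else x := by
  intro n
  induction n with
  | zero =>
    intro k hk hn x
    have : k = r := by omega
    subst this
    simp [wcheck]
    split_ifs <;> omega
  | succ n ih =>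
    intro k hk hn x
    have hkr : k < r := by omega
    rw [wcheck_succ r k hkr]
    have ih' := ih (k+1) (by omega) (by omega)
    simp only [Equiv.Perm.mul_apply]
    rcases eq_or_ne x k with rfl | hx
    · rw [show sT x x = x + 1 from Equiv.swap_apply_left x (x+1)]
      rw [ih' (x+1)]
      split_ifs <;> omega
    · rcases eq_or_ne x (k+1) with rfl | hx2
      · rw [show sT k (k+1) = k from Equiv.swap_apply_right k (k+1)]
        rw [ih' k]
        split_ifs <;> omega
      · rw [show sT k x = x from Equiv.swap_apply_of_ne_of_ne hx hx2]
        rw [ih' x]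
        split_ifs <;> omega

lemma wca (r k : ℕ) (hk : k ≤ r) (x : ℕ) :
    wcheck r k x = if x = k then r else if k < x ∧ x ≤ r then x - 1 else x :=
  wcheck_apply' r (r - k) k hk rfl x

lemma len_wcheck (r k : ℕ) (h1 : 1 ≤ k) (h2 : k ≤ r) : len r (wcheck r k) = r - k := by
  unfold len
  have heq : (((Finset.Icc 1 r) ×ˢ (Finset.Icc 1 r)).filter
      (fun p => p.1 < p.2 ∧ wcheck r k p.2 < wcheck r k p.1))
      = ({k} : Finset ℕ) ×ˢ Finset.Icc (k+1) r := by
    ext ⟨a, b⟩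
    simp only [Finset.mem_filter, Finset.mem_product, Finset.mem_Icc, Finset.mem_singleton]
    rw [wca r k h2 a, wca r k h2 b]
    split_ifs <;> omega
  rw [heq, Finset.card_product, Finset.card_singleton, Nat.card_Icc]
  omega

/-- For `k ∈ {2, …, r-1}`: if `i < k - 1` then `l(w̌_k t_{i,k}) ≥ l(w̌_k) + 2`; for
`i = k - 1` one has `w̌_k t_{k-1,k} = w̌_{k-1}` and `l(w̌_k t_{k-1,k}) = l(w̌_k) + 1`. -/
theorem stmt8 (r k : ℕ) (hk : 2 ≤ k) (hkr : k + 1 ≤ r) :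
    (∀ i, 1 ≤ i → i < k - 1 →
      len r (wcheck r k) + 2 ≤ len r (wcheck r k * tT i k)) ∧
    wcheck r k * tT (k - 1) k = wcheck r (k - 1) ∧
    len r (wcheck r k * tT (k - 1) k) = len r (wcheck r k) + 1 := by
  have hkle : k ≤ r := by omega
  have hpart2 : wcheck r k * tT (k-1) k = wcheck r (k-1) := by
    apply Equiv.ext
    intro x
    show wcheck r k (Equiv.swap (k-1) k x) = wcheck r (k-1) x
    rcases eq_or_ne x (k-1) with heq | hx1
    · rw [heq, Equiv.swap_apply_left, wca r k hkle, wca r (k-1) (by omega)]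
      split_ifs <;> omega
    · rcases eq_or_ne x k with heq | hx2
      · rw [heq, Equiv.swap_apply_right, wca r k hkle, wca r (k-1) (by omega)]
        split_ifs <;> omega
      · rw [Equiv.swap_apply_of_ne_of_ne hx1 hx2, wca r k hkle, wca r (k-1) (by omega)]
        split_ifs <;> omega
  refine ⟨?_, hpart2, ?_⟩
  · intro i hi1 hi2
    set u := wcheck r k * tT i k with hu
    have hu_apply : ∀ x, u x = wcheck r k (Equiv.swap i k x) := fun x => rfl
    have hsub : (({i} : Finset ℕ) ×ˢ Finset.Icc (i+1) r ∪
          (Finset.Icc (i+1) (k-1)) ×ˢ ({k} : Finset ℕ))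
        ⊆ ((Finset.Icc 1 r) ×ˢ (Finset.Icc 1 r)).filter
            (fun p => p.1 < p.2 ∧ u p.2 < u p.1) := by
      rintro ⟨a, b⟩ hp
      simp only [Finset.mem_union, Finset.mem_product, Finset.mem_Icc,
        Finset.mem_singleton] at hp
      simp only [Finset.mem_filter, Finset.mem_product, Finset.mem_Icc]
      rcases hp with ⟨rfl, hb1, hb2⟩ | ⟨⟨ha1, ha2⟩, heq2⟩
      · refine ⟨⟨⟨hi1, by omega⟩, by omega, hb2⟩, by omega, ?_⟩
        rw [hu_apply, hu_apply, Equiv.swap_apply_left]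
        rcases eq_or_ne b k with heq | hbk
        · rw [heq, Equiv.swap_apply_right, wca r k hkle, wca r k hkle]
          split_ifs <;> omega
        · have hbi : b ≠ a := by omega
          rw [Equiv.swap_apply_of_ne_of_ne hbi hbk, wca r k hkle, wca r k hkle]
          split_ifs <;> omega
      · refine ⟨⟨⟨by omega, by omega⟩, by omega, by omega⟩, by omega, ?_⟩
        rw [hu_apply, hu_apply, heq2, Equiv.swap_apply_right]
        have hai : a ≠ i := by omega
        have hak : a ≠ k := by omega
        rw [Equiv.swap_apply_of_ne_of_ne hai hak, wca r k hkle, wca r k hkle]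
        split_ifs <;> omega
    have hcard := Finset.card_le_card hsub
    have hdisj : Disjoint (({i} : Finset ℕ) ×ˢ Finset.Icc (i+1) r)
        ((Finset.Icc (i+1) (k-1)) ×ˢ ({k} : Finset ℕ)) := by
      rw [Finset.disjoint_left]
      rintro ⟨a, b⟩ h1 h2
      simp only [Finset.mem_product, Finset.mem_Icc, Finset.mem_singleton] at h1 h2
      omega
    rw [Finset.card_union_of_disjoint hdisj, Finset.card_product, Finset.card_product,
      Finset.card_singleton, Nat.card_Icc, Nat.card_Icc] at hcard
    rw [len_wcheck r k (by omega) hkle]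
    unfold len
    omega
  · rw [hpart2, len_wcheck r (k-1) (by omega) (by omega), len_wcheck r k (by omega) hkle]
    omega
end

section
/- Let g = k ⊕ p be a Cartan decomposition of a real semisimple Lie algebra with inner product B_θ, and let z_0 ∈ z(k) satisfy ad(z_0)²|_p = -id_p. For Z ∈ p, write Λ_0 for the element of k* dual to z_0, and define Φ(Z) ∈ k* by ⟨Φ(Z), X⟩ = B_θ(z_0, Σ_{k≥0} ad(Z)^{2k}/(2k)! X) for X ∈ k (i.e., Φ(Z) = (exp(Z)·Λ_0)|_k). Then ⟨Φ(Z) - Λ_0, z_0⟩ ≥ (1/2)||Z||², where || · || is the norm induced by B_θ. In particular Φ is proper. -/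
open scoped RealInnerProductSpace

/-- The even part `∑_{k ≥ 0} A^{2k} / (2k)!` of `e^{A}`. -/
noncomputable def evenExpOp {g : Type*} [NormedAddCommGroup g] [NormedSpace ℝ g]
    (A : g →L[ℝ] g) : g →L[ℝ] g :=
  ∑' m : ℕ, ((Nat.factorial (2 * m) : ℝ))⁻¹ • A ^ (2 * m)

/-- The moment map `Φ : Z ↦ (exp(Z)·Λ₀)|_k ∈ k*`, defined by
`⟨Φ(Z), X⟩ = B_θ(z₀, ∑_{m ≥ 0} ad(Z)^{2m}/(2m)! X)` for `X ∈ k`,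
where `ad(Z) = bracket Z`. -/
noncomputable def PhiMap {g : Type*} [NormedAddCommGroup g] [InnerProductSpace ℝ g]
    [FiniteDimensional ℝ g] (bracket : g →ₗ[ℝ] g →ₗ[ℝ] g)
    (k : Submodule ℝ g) (z₀ : g) (Z : g) : ↥k →L[ℝ] ℝ :=
  ((innerSL ℝ z₀).comp
    (evenExpOp (LinearMap.toContinuousLinearMap (bracket Z)))).comp k.subtypeL

/-- `Λ₀ ∈ k*`, the element dual to `z₀` via the inner product. -/
noncomputable def Lam0 {g : Type*} [NormedAddCommGroup g] [InnerProductSpace ℝ g]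
    (k : Submodule ℝ g) (z₀ : g) : ↥k →L[ℝ] ℝ :=
  (innerSL ℝ z₀).comp k.subtypeL

/-! Since `ad Z` is symmetric for `Z ∈ p`, the terms `⟪z₀, ad(Z)^{2m} z₀⟫ = ‖ad(Z)^m z₀‖²` of
`⟨Φ(Z), z₀⟩` are nonnegative, so the series is at least its first two terms
`‖z₀‖² + ½‖[Z, z₀]‖²`; and `‖[Z, z₀]‖ = ‖Z‖` because `ad(z₀)² = -1` on `p`. Combined with
`⟨Φ(Z), z₀⟩ ≤ ‖Φ(Z)‖ ‖z₀‖`, the bound gives `‖Z‖ ≤ ‖Φ(Z)‖`, whence properness. -/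

open Filter NormedSpace

section EvenExp

variable {E : Type*} [NormedAddCommGroup E] [NormedSpace ℝ E] [CompleteSpace E]

lemma hasSum_evenExpOp (A : E →L[ℝ] E) :
    HasSum (fun m : ℕ => ((Nat.factorial (2 * m) : ℝ))⁻¹ • A ^ (2 * m)) (evenExpOp A) :=
  ((expSeries_summable' (𝕂 := ℝ) A).comp_injective
    (mul_right_injective₀ two_ne_zero)).hasSum

lemma evenExpOp_eq_half_exp_add_exp_neg (A : E →L[ℝ] E) :
    evenExpOp A = (2⁻¹ : ℝ) • (exp A + exp (-A)) := by
  set a : ℕ → E →L[ℝ] E := fun n => (2⁻¹ : ℝ) • ((n.factorial : ℝ)⁻¹ • A ^ n +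
    (n.factorial : ℝ)⁻¹ • (-A) ^ n)
  have hsum : HasSum a ((2⁻¹ : ℝ) • (exp A + exp (-A))) :=
    ((exp_series_hasSum_exp' A).add (exp_series_hasSum_exp' (-A))).const_smul _
  have hodd : ∀ n ∉ Set.range (2 * ·), a n = 0 := by
    intro n hn
    obtain ⟨m, rfl⟩ :=
      (Nat.even_or_odd n).resolve_left fun ⟨m, hm⟩ => hn ⟨m, by simp only; omega⟩
    simp [a, Odd.neg_pow ⟨m, rfl⟩]
  have heven : ∀ m, a (2 * m) = ((Nat.factorial (2 * m) : ℝ))⁻¹ • A ^ (2 * m) := by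
    intro m
    simp [a, Even.neg_pow ⟨m, two_mul m⟩, ← two_smul ℝ (_ • _ : E →L[ℝ] E), smul_smul]
  refine (hasSum_evenExpOp A).unique ?_
  rw [← funext heven]
  exact ((mul_right_injective₀ two_ne_zero).hasSum_iff hodd).2 hsum

lemma continuous_evenExpOp : Continuous (evenExpOp : (E →L[ℝ] E) → E →L[ℝ] E) := by
  -- `exp_continuous` is stated for normed `ℚ`-algebras
  let : NormedAlgebra ℚ (E →L[ℝ] E) := .restrictScalars ℚ ℝ _
  simp_rw [funext evenExpOp_eq_half_exp_add_exp_neg]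
  fun_prop

end EvenExp

section Symmetric

variable {E : Type*} [NormedAddCommGroup E] [InnerProductSpace ℝ E]

lemma inner_pow_two_mul_apply_self {A : E →L[ℝ] E} (hA : (A : E →ₗ[ℝ] E).IsSymmetric) (m : ℕ)
    (x : E) : ⟪x, (A ^ (2 * m)) x⟫ = ‖(A ^ m) x‖ ^ 2 := by
  rw [two_mul, pow_add, mul_apply_eq_comp, ← real_inner_self_eq_norm_sq]
  have hAm := hA.pow m
  rw [← ContinuousLinearMap.toLinearMap_pow] at hAm
  exact (hAm x _).symm

lemma norm_sq_add_half_norm_sq_le_inner_evenExpOp [CompleteSpace E] {A : E →L[ℝ] E}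
    (hA : (A : E →ₗ[ℝ] E).IsSymmetric) (x : E) :
    ‖x‖ ^ 2 + ‖A x‖ ^ 2 / 2 ≤ ⟪x, evenExpOp A x⟫ := by
  have h := (hasSum_evenExpOp A).mapL ((innerSL ℝ x).comp (ContinuousLinearMap.apply ℝ E x))
  simp only [ContinuousLinearMap.comp_apply, ContinuousLinearMap.apply_apply, map_smul,
    innerSL_apply_apply, inner_pow_two_mul_apply_self hA] at h
  have := sum_le_hasSum (Finset.range 2) (fun m _ => by positivity) h
  simpa [Finset.sum_range_succ, div_eq_inv_mul] using this

end Symmetric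

lemma abs_le_opNorm_of_sq_div_two_add_norm_sq_le {E : Type*} [SeminormedAddCommGroup E]
    [NormedSpace ℝ E] (φ : E →L[ℝ] ℝ) (x : E) {r : ℝ} (h : r ^ 2 / 2 + ‖x‖ ^ 2 ≤ φ x) :
    |r| ≤ ‖φ‖ := by
  have hφx : φ x ≤ ‖φ‖ * ‖x‖ := (le_abs_self _).trans (φ.le_opNorm x)
  exact abs_le_of_sq_le_sq (by nlinarith [sq_nonneg (‖φ‖ - ‖x‖)]) (norm_nonneg φ)

lemma isProperMap_of_norm_le_norm {E F : Type*} [NormedAddCommGroup E] [ProperSpace E]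
    [NormedAddCommGroup F] [ProperSpace F] {f : E → F} (hf : Continuous f)
    (h : ∀ x, ‖x‖ ≤ ‖f x‖) : IsProperMap f := by
  refine isProperMap_iff_tendsto_cocompact.2 ⟨hf, ?_⟩
  rw [← Metric.cobounded_eq_cocompact, ← Metric.cobounded_eq_cocompact,
    ← tendsto_norm_atTop_iff_cobounded]
  exact tendsto_atTop_mono h tendsto_norm_cobounded_atTop

section CartanDecomposition

variable {g : Type*} [NormedAddCommGroup g] [InnerProductSpace ℝ g]
  {bracket : g →ₗ[ℝ] g →ₗ[ℝ] g}

lemma norm_bracket_eq_of_bracket_bracket_eq_neg (hanti : bracket.IsAlt) {z₀ Z : g}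
    (hZ : (bracket Z).IsSymmetric) (hW : (bracket (bracket z₀ Z)).IsSymmetric)
    (hsq : bracket z₀ (bracket z₀ Z) = -Z) : ‖bracket Z z₀‖ = ‖Z‖ := by
  set W := bracket z₀ Z
  have hZz : bracket Z z₀ = -W := (hanti.neg z₀ Z).symm
  have hWz : bracket W z₀ = Z := by rw [← hanti.neg, hsq, neg_neg]
  rw [hZz, norm_neg, ← sq_eq_sq₀ (norm_nonneg _) (norm_nonneg _),
    ← real_inner_self_eq_norm_sq, ← real_inner_self_eq_norm_sq]
  calc ⟪W, W⟫ = -⟪W, bracket Z z₀⟫ := by rw [hZz, inner_neg_right, neg_neg]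
    _ = -⟪bracket Z W, z₀⟫ := by rw [hZ W z₀]
    _ = ⟪bracket W Z, z₀⟫ := by rw [← hanti.neg, inner_neg_left, neg_neg]
    _ = ⟪Z, bracket W z₀⟫ := hW Z z₀
    _ = ⟪Z, Z⟫ := by rw [hWz]

variable [FiniteDimensional ℝ g]

lemma continuous_phiMap (k : Submodule ℝ g) (z₀ : g) : Continuous (PhiMap bracket k z₀) := by
  have had : Continuous fun Z => LinearMap.toContinuousLinearMap (bracket Z) :=
    ((LinearMap.toContinuousLinearMap : (g →ₗ[ℝ] g) ≃ₗ[ℝ] g →L[ℝ] g).toLinearMap ∘ₗ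
      bracket).continuous_of_finiteDimensional
  exact (continuous_const.clm_comp (continuous_evenExpOp.comp had)).clm_comp continuous_const

lemma half_norm_bracket_sq_le_phiMap_sub_lam0 {k : Submodule ℝ g} {z₀ : g} (hz₀ : z₀ ∈ k)
    {Z : g} (hZ : (bracket Z).IsSymmetric) :
    1 / 2 * ‖bracket Z z₀‖ ^ 2 ≤ (PhiMap bracket k z₀ Z - Lam0 k z₀) ⟨z₀, hz₀⟩ := by
  set A := LinearMap.toContinuousLinearMap (bracket Z)
  have hPhi :
      (PhiMap bracket k z₀ Z - Lam0 k z₀) ⟨z₀, hz₀⟩ = ⟪z₀, evenExpOp A z₀⟫ - ‖z₀‖ ^ 2 := by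
    simp [PhiMap, Lam0, A]
  have := norm_sq_add_half_norm_sq_le_inner_evenExpOp (A := A) hZ z₀
  rw [hPhi, show bracket Z z₀ = A z₀ from rfl]
  linarith

end CartanDecomposition

theorem stmt15_general (g : Type*) [NormedAddCommGroup g] [InnerProductSpace ℝ g]
    [FiniteDimensional ℝ g] (bracket : g →ₗ[ℝ] g →ₗ[ℝ] g)
    (hanti : ∀ x : g, bracket x x = 0)
    (k p : Submodule ℝ g)
    (hkp : ∀ X ∈ k, ∀ Y ∈ p, bracket X Y ∈ p)
    (hsym : ∀ Z ∈ p, LinearMap.IsSymmetric (bracket Z))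
    (z₀ : g) (hz₀ : z₀ ∈ k)
    (hsq : ∀ Y ∈ p, bracket z₀ (bracket z₀ Y) = -Y) :
    (∀ Z : ↥p, (1 / 2 : ℝ) * ‖(Z : g)‖ ^ 2 ≤
      (PhiMap bracket k z₀ (Z : g) - Lam0 k z₀) ⟨z₀, hz₀⟩) ∧
    IsProperMap (fun Z : ↥p => PhiMap bracket k z₀ (Z : g)) := by
  have hbound : ∀ Z : ↥p, (1 / 2 : ℝ) * ‖(Z : g)‖ ^ 2 ≤
      (PhiMap bracket k z₀ (Z : g) - Lam0 k z₀) ⟨z₀, hz₀⟩ := by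
    rintro ⟨Z, hZ⟩
    rw [← norm_bracket_eq_of_bracket_bracket_eq_neg hanti (hsym Z hZ)
      (hsym _ (hkp z₀ hz₀ Z hZ)) (hsq Z hZ)]
    exact half_norm_bracket_sq_le_phiMap_sub_lam0 hz₀ (hsym Z hZ)
  refine ⟨hbound, isProperMap_of_norm_le_norm (E := ↥p) (F := ↥k →L[ℝ] ℝ)
    ((continuous_phiMap k z₀).comp continuous_subtype_val) fun Z => ?_⟩
  have hlam : Lam0 k z₀ ⟨z₀, hz₀⟩ = ‖(⟨z₀, hz₀⟩ : k)‖ ^ 2 := real_inner_self_eq_norm_sq z₀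
  have hZ := hbound Z
  rw [sub_apply, hlam] at hZ
  simpa using abs_le_opNorm_of_sq_div_two_add_norm_sq_le _ ⟨z₀, hz₀⟩ (r := ‖(Z : g)‖)
    (by linarith)

/-- Let `g = k ⊕ p` be a Cartan decomposition of a real semisimple Lie algebra with
inner product `B_θ` (the Lie bracket is the bilinear map `bracket`, `ad(Z) = bracket Z`
being `B_θ`-symmetric for `Z ∈ p`), and let `z₀ ∈ z(k)` satisfy `ad(z₀)²|_p = -id_p`.
Then the map `Φ : p → k*`, `⟨Φ(Z), X⟩ = B_θ(z₀, ∑_{m} ad(Z)^{2m}/(2m)! X)`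
(i.e. `Φ(Z) = (exp(Z)·Λ₀)|_k`), satisfies `⟨Φ(Z) - Λ₀, z₀⟩ ≥ ½‖Z‖²` for all `Z ∈ p`;
in particular `Φ` is proper. -/
theorem stmt15 (g : Type*) [NormedAddCommGroup g] [InnerProductSpace ℝ g]
    [FiniteDimensional ℝ g] (bracket : g →ₗ[ℝ] g →ₗ[ℝ] g)
    (hanti : ∀ x : g, bracket x x = 0)
    (hjacobi : ∀ x y z : g,
      bracket x (bracket y z) = bracket (bracket x y) z + bracket y (bracket x z))
    (k p : Submodule ℝ g) (hcompl : IsCompl k p)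
    (hkk : ∀ X ∈ k, ∀ Y ∈ k, bracket X Y ∈ k)
    (hkp : ∀ X ∈ k, ∀ Y ∈ p, bracket X Y ∈ p)
    (hpp : ∀ X ∈ p, ∀ Y ∈ p, bracket X Y ∈ k)
    (hsym : ∀ Z ∈ p, LinearMap.IsSymmetric (bracket Z))
    (z₀ : g) (hz₀ : z₀ ∈ k)
    (hcent : ∀ X ∈ k, bracket z₀ X = 0)
    (hsq : ∀ Y ∈ p, bracket z₀ (bracket z₀ Y) = -Y) :
    (∀ Z : ↥p, (1 / 2 : ℝ) * ‖(Z : g)‖ ^ 2 ≤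
      (PhiMap bracket k z₀ (Z : g) - Lam0 k z₀) ⟨z₀, hz₀⟩) ∧
    IsProperMap (fun Z : ↥p => PhiMap bracket k z₀ (Z : g)) :=
  stmt15_general g bracket hanti k p hkp hsym z₀ hz₀ hsq
end
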